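/- arXiv:2603.08509 — 2 statements merged into one kernel-verified Lean document; each statement's English description precedes it below -/
import Mathlib

section
/- Each Young orthogonal form operator s_k (2 ≤ k ≤ n) on W^λ is an isometry for the inner product on W^λ making the basis (e_T), T ∈ SYT(λ), orthonormal: ⟨s_k x, s_k y⟩ = ⟨x, y⟩ for all x, y ∈ W^λ. -/
/-! The map `T ↦ (k−1 k)T`, taken to be the identity when the swapped filling is not standard,
is an involution of `SYT λ`, so the basis splits into orbits of size one and two. On an orbit
`{T, T'}` the axial distance changes sign, so `s_k` acts by `[[a, b], [b, -a]]` with `a = 1/d`,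
`b = √(1 − a²)`, which is orthogonal since `d` is a nonzero integer. On a fixed tableau the entries
`k−1` and `k` lie in neighbouring cells of a row or a column, so `d = ±1` and `s_k` acts by `±1`. -/

noncomputable section

namespace WLE

/-- A filling (bijective labelling of the cells of `μ` by `Fin μ.card`) is *standard* if
its entries increase strictly along rows and columns. -/
def IsStandard (μ : YoungDiagram) (f : {c : ℕ × ℕ // c ∈ μ.cells} ≃ Fin μ.card) : Prop :=
  ∀ c c' : {c : ℕ × ℕ // c ∈ μ.cells},
    ((c.1.1 = c'.1.1 ∧ c.1.2 < c'.1.2) ∨ (c.1.2 = c'.1.2 ∧ c.1.1 < c'.1.1)) →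
      f c < f c'

/-- A standard Young tableau of shape `μ`: a bijection from the cells of `μ` to
`Fin μ.card` (0-indexed entries; the paper's entry `k ∈ {1,…,n}` corresponds to the
value `k − 1 : Fin μ.card`) increasing along rows and columns. -/
def SYT (μ : YoungDiagram) : Type :=
  {f : {c : ℕ × ℕ // c ∈ μ.cells} ≃ Fin μ.card // IsStandard μ f}

instance (μ : YoungDiagram) : Finite (SYT μ) := by
  have : Finite ({c : ℕ × ℕ // c ∈ μ.cells} ≃ Fin μ.card) :=
    Finite.of_injective (fun f => (f : {c : ℕ × ℕ // c ∈ μ.cells} → Fin μ.card))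
      fun f g h => Equiv.coe_fn_injective h
  exact Subtype.finite

noncomputable instance (μ : YoungDiagram) : Fintype (SYT μ) := Fintype.ofFinite _

noncomputable instance (μ : YoungDiagram) : DecidableEq (SYT μ) := Classical.decEq _

/-- `content T k` is the content `j − i` of the cell (row `i`, column `j`, 0-indexed)
of `T` containing the entry `k`. -/
def content {μ : YoungDiagram} (T : SYT μ) (k : Fin μ.card) : ℤ :=
  ((T.1.symm k).1.2 : ℤ) - ((T.1.symm k).1.1 : ℤ)

/-- The index `k − 1` (in `Fin μ.card`), used to form the adjacent transposition
`(k−1 k)`. -/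
def kpred {μ : YoungDiagram} (k : Fin μ.card) : Fin μ.card :=
  ⟨k.val - 1, lt_of_le_of_lt (Nat.sub_le _ _) k.isLt⟩

/-- The filling obtained from `T` by exchanging the entries `k−1` and `k`. -/
def swapped {μ : YoungDiagram} (k : Fin μ.card) (T : SYT μ) :
    {c : ℕ × ℕ // c ∈ μ.cells} ≃ Fin μ.card :=
  T.1.trans (Equiv.swap (kpred k) k)

/-- The (real) axial distance `d = c_T(k) − c_T(k−1)`. -/
def dval {μ : YoungDiagram} (k : Fin μ.card) (T : SYT μ) : ℝ :=
  ((content T k - content T (kpred k) : ℤ) : ℝ)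

noncomputable instance (μ : YoungDiagram) : DecidablePred (IsStandard μ) :=
  fun _ => Classical.propDecidable _

/-- The Young orthogonal form operator `s_k` on `W^μ = EuclideanSpace ℝ (SYT μ)`:
`s_k e_T = (1/d) e_T + √(1 − 1/d²) e_{(k−1 k)T}`, with `d = c_T(k) − c_T(k−1)` and
`e_{(k−1 k)T} = 0` when the swapped filling is not standard. -/
def youngOp (μ : YoungDiagram) (k : Fin μ.card) :
    EuclideanSpace ℝ (SYT μ) →ₗ[ℝ] EuclideanSpace ℝ (SYT μ) where
  toFun x := WithLp.toLp 2 fun T => (dval k T)⁻¹ * x T +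
    Real.sqrt (1 - ((dval k T)⁻¹) ^ 2) *
      (if h : IsStandard μ (swapped k T) then x ⟨swapped k T, h⟩ else 0)
  map_add' x y := by
    ext T
    by_cases h : IsStandard μ (swapped k T) <;>
      simp [h, PiLp.add_apply] <;> (try erw [Pi.add_apply]) <;> ring
  map_smul' c x := by
    ext T
    by_cases h : IsStandard μ (swapped k T) <;>
      simp [h, PiLp.smul_apply, smul_eq_mul] <;> (try erw [Pi.smul_apply, smul_eq_mul]) <;> ring

end WLE


theorem Fintype.sum_eq_zero_of_involutive {ι R : Type*} [Fintype ι] [NonAssocSemiring R]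
    [NoZeroDivisors R] [CharZero R] {f : ι → R} {σ : ι → ι} (hσ : Function.Involutive σ)
    (h : ∀ i, f i + f (σ i) = 0) : ∑ i, f i = 0 :=
  Finset.sum_ninvolution σ h
    (fun i hi hfix => hi (add_self_eq_zero.1 (by simpa only [hfix] using h i)))
    (fun i => Finset.mem_univ _) hσ

theorem Fin.eq_and_eq_of_lt_of_swap_le {n : ℕ} {i j a b : Fin n} (hij : i.val + 1 = j.val)
    (hab : a < b) (h : Equiv.swap i j b ≤ Equiv.swap i j a) : a = i ∧ b = j := by
  rw [Equiv.swap_apply_def, Equiv.swap_apply_def] at h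
  simp only [Fin.ext_iff, Fin.lt_def] at hab ⊢
  split_ifs at h <;> simp only [Fin.ext_iff, Fin.le_def] at * <;> omega

namespace WLE

open scoped RealInnerProductSpace

section Tableaux

variable {μ : YoungDiagram}

theorem isStandard_iff_strictMono (f : {c : ℕ × ℕ // c ∈ μ.cells} ≃ Fin μ.card) :
    IsStandard μ f ↔ StrictMono f := by
  refine ⟨fun hf p q hpq => ?_, fun hf p q hpq => hf ?_⟩
  · obtain ⟨hrow, hcol⟩ : p.1.1 ≤ q.1.1 ∧ p.1.2 ≤ q.1.2 := Prod.le_def.1 hpq.le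
    have hne : ¬(p.1.1 = q.1.1 ∧ p.1.2 = q.1.2) := fun h => hpq.ne (Subtype.ext (Prod.ext h.1 h.2))
    by_cases hrow' : p.1.1 = q.1.1
    · exact hf p q (Or.inl ⟨hrow', by omega⟩)
    by_cases hcol' : p.1.2 = q.1.2
    · exact hf p q (Or.inr ⟨hcol', by omega⟩)
    let corner : {c : ℕ × ℕ // c ∈ μ.cells} :=
      ⟨(p.1.1, q.1.2), μ.isLowerSet (Prod.mk_le_mk.2 ⟨hrow, le_rfl⟩) q.2⟩
    calc f p < f corner := hf p corner (Or.inl ⟨rfl, show p.1.2 < q.1.2 by omega⟩)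
      _ < f q := hf corner q (Or.inr ⟨rfl, show p.1.1 < q.1.1 by omega⟩)
  · show p.1 < q.1
    rcases hpq with ⟨hrow, hcol⟩ | ⟨hcol, hrow⟩
    · exact Prod.lt_iff.2 (Or.inr ⟨hrow.le, hcol⟩)
    · exact Prod.lt_iff.2 (Or.inl ⟨hrow, hcol.le⟩)

theorem SYT.strictMono (T : SYT μ) : StrictMono T.1 :=
  (isStandard_iff_strictMono T.1).1 T.2

theorem SYT.eq_or_eq_of_le_of_le (T : SYT μ) {p q m : {c : ℕ × ℕ // c ∈ μ.cells}}
    (hsucc : (T.1 q).val = (T.1 p).val + 1) (hpm : p ≤ m) (hmq : m ≤ q) : m = p ∨ m = q := by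
  have h₁ := Fin.le_def.1 (T.strictMono.monotone hpm)
  have h₂ := Fin.le_def.1 (T.strictMono.monotone hmq)
  rcases (by omega : (T.1 m).val = (T.1 p).val ∨ (T.1 m).val = (T.1 q).val) with h | h
  · exact Or.inl (T.1.injective (Fin.ext h))
  · exact Or.inr (T.1.injective (Fin.ext h))

theorem SYT.adjacent_of_le (T : SYT μ) {p q : {c : ℕ × ℕ // c ∈ μ.cells}} (hpq : p ≤ q)
    (hsucc : (T.1 q).val = (T.1 p).val + 1) :
    q.1 = (p.1.1, p.1.2 + 1) ∨ q.1 = (p.1.1 + 1, p.1.2) := by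
  obtain ⟨hrow, hcol⟩ : p.1.1 ≤ q.1.1 ∧ p.1.2 ≤ q.1.2 := Prod.le_def.1 hpq
  have hne : p ≠ q := fun h => by simp [h] at hsucc
  have step (c : ℕ × ℕ) (hpc : p.1 < c) (hcq : c ≤ q.1) : q.1 = c := by
    let m : {c : ℕ × ℕ // c ∈ μ.cells} := ⟨c, μ.isLowerSet hcq q.2⟩
    rcases T.eq_or_eq_of_le_of_le (m := m) hsucc hpc.le hcq with h | h
    · exact absurd (congrArg Subtype.val h) hpc.ne'
    · exact (congrArg Subtype.val h).symm
  by_cases hrow' : p.1.1 = q.1.1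
  · have hcol' : p.1.2 < q.1.2 := by
      by_contra
      exact hne (Subtype.ext (Prod.ext hrow' (by omega)))
    exact Or.inl (step _ (Prod.lt_iff.2 (Or.inr ⟨le_rfl, Nat.lt_succ_self _⟩))
      (Prod.le_def.2 ⟨hrow, hcol'⟩))
  · exact Or.inr (step _ (Prod.lt_iff.2 (Or.inl ⟨Nat.lt_succ_self _, le_rfl⟩))
      (Prod.le_def.2 ⟨show p.1.1 + 1 ≤ q.1.1 by omega, hcol⟩))

variable {k : Fin μ.card}

theorem val_kpred_add_one (hk : 1 ≤ k.val) : (kpred k).val + 1 = k.val := by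
  simp only [kpred]
  omega

theorem content_sub_content_kpred_eq_one_or_eq_neg_one (T : SYT μ) (hk : 1 ≤ k.val)
    (hle : T.1.symm (kpred k) ≤ T.1.symm k) :
    content T k - content T (kpred k) = 1 ∨ content T k - content T (kpred k) = -1 := by
  have hsucc : (T.1 (T.1.symm k)).val = (T.1 (T.1.symm (kpred k))).val + 1 := by
    simp only [Equiv.apply_symm_apply, val_kpred_add_one hk]
  rcases T.adjacent_of_le hle hsucc with h | h
  · left
    rw [content, content, h]
    push_cast
    ring
  · right
    rw [content, content, h]
    push_cast
    ring

theorem content_sub_content_kpred_ne_zero (T : SYT μ) (hk : 1 ≤ k.val) :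
    content T k - content T (kpred k) ≠ 0 := by
  intro h
  set p := T.1.symm (kpred k) with hp
  set q := T.1.symm k with hq
  -- cells on a common diagonal are comparable in the product order
  have hdiag : (q.1.2 : ℤ) - q.1.1 = (p.1.2 : ℤ) - p.1.1 := sub_eq_zero.1 h
  by_cases hrow : p.1.1 ≤ q.1.1
  · have hle : p ≤ q := Prod.le_def.2 ⟨hrow, by omega⟩
    rcases content_sub_content_kpred_eq_one_or_eq_neg_one T hk hle with h' | h' <;> omega
  · have hle : q ≤ p := Prod.le_def.2 ⟨by omega, by omega⟩
    have hmono := Fin.le_def.1 (T.strictMono.monotone hle)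
    simp only [hp, hq, Equiv.apply_symm_apply] at hmono
    have := val_kpred_add_one hk
    omega

theorem one_le_dval_sq (T : SYT μ) (hk : 1 ≤ k.val) : 1 ≤ dval k T ^ 2 := by
  have h := (one_le_sq_iff_one_le_abs _).2 (Int.one_le_abs (content_sub_content_kpred_ne_zero T hk))
  rw [dval]
  exact_mod_cast h

theorem inv_dval_sq_le_one (T : SYT μ) (hk : 1 ≤ k.val) : (dval k T)⁻¹ ^ 2 ≤ 1 := by
  rw [inv_pow]
  exact inv_le_one_of_one_le₀ (one_le_dval_sq T hk)

theorem dval_sq_eq_one_of_not_isStandard {T : SYT μ} (hk : 1 ≤ k.val)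
    (h : ¬IsStandard μ (swapped k T)) : dval k T ^ 2 = 1 := by
  rw [isStandard_iff_strictMono, StrictMono] at h
  push Not at h
  obtain ⟨p, q, hpq, hswap⟩ := h
  obtain ⟨hp, hq⟩ :=
    Fin.eq_and_eq_of_lt_of_swap_le (val_kpred_add_one hk) (T.strictMono hpq) hswap
  rw [← T.1.eq_symm_apply] at hp hq
  subst hp hq
  rcases content_sub_content_kpred_eq_one_or_eq_neg_one T hk hpq.le with h | h <;> simp [dval, h]

def swapTableau (k : Fin μ.card) (T : SYT μ) : SYT μ :=
  if h : IsStandard μ (swapped k T) then ⟨swapped k T, h⟩ else T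

theorem swapTableau_of_isStandard {T : SYT μ} (h : IsStandard μ (swapped k T)) :
    swapTableau k T = ⟨swapped k T, h⟩ :=
  dif_pos h

theorem swapTableau_of_not_isStandard {T : SYT μ} (h : ¬IsStandard μ (swapped k T)) :
    swapTableau k T = T :=
  dif_neg h

theorem swapped_swapTableau {T : SYT μ} (h : IsStandard μ (swapped k T)) :
    swapped k (swapTableau k T) = T.1 := by
  rw [swapTableau_of_isStandard h]
  exact Equiv.ext fun c => Equiv.swap_apply_self _ _ _

theorem isStandard_swapped_swapTableau {T : SYT μ} (h : IsStandard μ (swapped k T)) :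
    IsStandard μ (swapped k (swapTableau k T)) :=
  (swapped_swapTableau h).symm ▸ T.2

theorem swapTableau_involutive (k : Fin μ.card) : Function.Involutive (swapTableau (μ := μ) k) := by
  intro T
  by_cases h : IsStandard μ (swapped k T)
  · exact (swapTableau_of_isStandard (isStandard_swapped_swapTableau h)).trans
      (Subtype.ext (swapped_swapTableau h))
  · rw [swapTableau_of_not_isStandard h, swapTableau_of_not_isStandard h]

theorem dval_swapTableau {T : SYT μ} (h : IsStandard μ (swapped k T)) :
    dval k (swapTableau k T) = -dval k T := by
  rw [swapTableau_of_isStandard h]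
  simp only [dval, content, swapped, Equiv.symm_trans_apply, Equiv.symm_swap,
    Equiv.swap_apply_left, Equiv.swap_apply_right]
  push_cast
  ring

theorem youngOp_apply_of_isStandard {T : SYT μ} (h : IsStandard μ (swapped k T))
    (x : EuclideanSpace ℝ (SYT μ)) :
    youngOp μ k x T =
      (dval k T)⁻¹ * x T + √(1 - (dval k T)⁻¹ ^ 2) * x (swapTableau k T) := by
  simp [youngOp, h, swapTableau_of_isStandard h]

theorem youngOp_apply_of_not_isStandard {T : SYT μ} (h : ¬IsStandard μ (swapped k T))
    (x : EuclideanSpace ℝ (SYT μ)) : youngOp μ k x T = (dval k T)⁻¹ * x T := by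
  simp [youngOp, h]

theorem youngOp_mul_youngOp_add_swapTableau {T : SYT μ} (hk : 1 ≤ k.val)
    (h : IsStandard μ (swapped k T)) (x y : EuclideanSpace ℝ (SYT μ)) :
    youngOp μ k x T * youngOp μ k y T +
        youngOp μ k x (swapTableau k T) * youngOp μ k y (swapTableau k T) =
      x T * y T + x (swapTableau k T) * y (swapTableau k T) := by
  have hs : √(1 - (dval k T)⁻¹ ^ 2) ^ 2 = 1 - (dval k T)⁻¹ ^ 2 :=
    Real.sq_sqrt (sub_nonneg.2 (inv_dval_sq_le_one T hk))
  simp only [youngOp_apply_of_isStandard h,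
    youngOp_apply_of_isStandard (isStandard_swapped_swapTableau h),
    swapTableau_involutive k T, dval_swapTableau h, inv_neg, neg_sq]
  linear_combination (x T * y T + x (swapTableau k T) * y (swapTableau k T)) * hs

theorem youngOp_mul_youngOp_of_not_isStandard {T : SYT μ} (hk : 1 ≤ k.val)
    (h : ¬IsStandard μ (swapped k T)) (x y : EuclideanSpace ℝ (SYT μ)) :
    youngOp μ k x T * youngOp μ k y T = x T * y T := by
  have hd : (dval k T)⁻¹ ^ 2 = 1 := by
    rw [inv_pow, dval_sq_eq_one_of_not_isStandard hk h, inv_one]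
  rw [youngOp_apply_of_not_isStandard h, youngOp_apply_of_not_isStandard h]
  linear_combination x T * y T * hd

end Tableaux

theorem youngOp_isometry_general (μ : YoungDiagram)
    (k : Fin μ.card) (hk : 1 ≤ k.val) (x y : EuclideanSpace ℝ (SYT μ)) :
    ⟪youngOp μ k x, youngOp μ k y⟫ = ⟪x, y⟫ := by
  simp only [PiLp.inner_apply, RCLike.inner_apply, conj_trivial]
  rw [← sub_eq_zero, ← Finset.sum_sub_distrib]
  refine Fintype.sum_eq_zero_of_involutive (swapTableau_involutive k) fun T => ?_
  by_cases h : IsStandard μ (swapped k T)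
  · linear_combination youngOp_mul_youngOp_add_swapTableau hk h y x
  · rw [swapTableau_of_not_isStandard h]
    linear_combination 2 * youngOp_mul_youngOp_of_not_isStandard hk h y x

/-- Each Young orthogonal form operator `s_k` (`2 ≤ k ≤ n`, i.e.
`1 ≤ k` in the 0-indexed convention) on `W^λ = EuclideanSpace ℝ (SYT μ)` is an
isometry for the inner product making the basis `(e_T)` orthonormal. -/
theorem youngOp_isometry (μ : YoungDiagram) (hn : 2 ≤ μ.card)
    (k : Fin μ.card) (hk : 1 ≤ k.val) (x y : EuclideanSpace ℝ (SYT μ)) :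
    ⟪youngOp μ k x, youngOp μ k y⟫ = ⟪x, y⟫ :=
  youngOp_isometry_general μ k hk x y

end WLE
end
end

section
/- Let n ≥ 2, let λ be a partition of n−2, let μ and ν be two distinct partitions of n−1 and ξ a partition of n, such that each of the diagrams of μ and ν is obtained from that of λ by adding one cell, and the diagram of ξ is obtained from each of the diagrams of μ and ν by adding one cell. Let c₁ be the content of the cell ξ/μ and c₂ the content of the cell μ/λ (the content of a cell in row i, column j being j − i). Then the endomorphism i_{λν} ∘ i_{νξ} ∘ ρ_ξ((n−1 n)) ∘ i_{ξμ} ∘ i_{μλ} of W^λ equals √(1 − 1/(c₁ − c₂)²) · id; that is, it equals sin θ · id, where θ ∈ [0,π] is defined by cos θ = 1/(c₁ − c₂). -/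
/-!
In the basis of standard tableaux, `i_{ξμ} i_{μλ}` sends `e_T` to `e_S`, where `S` extends `T` by
`n − 1` in `μ/λ` and `n` in `ξ/μ`, while `i_{λν} i_{νξ}` reads off, at `T'`, the coefficient of
`e_U` for the tableau `U` extending `T'` through `ν`. Since `ν/λ = ξ/μ` and `ξ/ν = μ/λ`, the tableau
`U` carries `n − 1` and `n` in the same two cells as `S`, but in the opposite order. So `U ≠ S`, and
`(n−1 n) U = S` exactly when `T' = T`; by the Young orthogonal form the coefficient is therefore
`√(1 − 1/d²)` on the diagonal and `0` elsewhere, with `d = c_U(n) − c_U(n−1) = c₂ − c₁`.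
-/

noncomputable section

namespace WLE

open scoped RealInnerProductSpace

theorem _root_.Finset.eq_insert_of_card_eq_add_one {α : Type*} [DecidableEq α] {s t : Finset α}
    {a : α} (hst : s ⊆ t) (hcard : t.card = s.card + 1) (ha : a ∈ t) (has : a ∉ s) :
    t = insert a s :=
  (Finset.eq_of_subset_of_card_le (Finset.insert_subset ha hst)
    (by rw [Finset.card_insert_of_notMem has, hcard])).symm

theorem _root_.Finset.mem_and_notMem_of_diamond {α : Type*} [DecidableEq α] {s t u v : Finset α}
    {a b : α} (htu : t ≠ u) (hsu : s ⊆ u) (huv : u ⊆ v) (hsu_card : u.card = s.card + 1)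
    (huv_card : v.card = u.card + 1) (ht : t = insert b s) (hv : v = insert a t)
    (hbs : b ∉ s) (hat : a ∉ t) : a ∈ u ∧ b ∉ u := by
  have hbu : b ∉ u := fun hbu =>
    htu (ht.trans (Finset.eq_insert_of_card_eq_add_one hsu hsu_card hbu hbs).symm)
  have hbv : b ∈ v := by simp [hv, ht]
  have hav : a ∈ v := by simp [hv]
  rw [Finset.eq_insert_of_card_eq_add_one huv huv_card hbv hbu, Finset.mem_insert] at hav
  refine ⟨hav.resolve_left ?_, hbu⟩
  rintro rfl
  exact hat (by simp [ht])

theorem _root_.Finset.mem_iff_ne_and_ne_of_mem_insert_insert {α : Type*} [DecidableEq α]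
    {s : Finset α} {a b x : α} (hx : x ∈ insert a (insert b s)) (has : a ∉ s) (hbs : b ∉ s) :
    x ∈ s ↔ x ≠ a ∧ x ≠ b := by
  rw [Finset.mem_insert, Finset.mem_insert] at hx
  exact ⟨fun h => ⟨ne_of_mem_of_not_mem h has, ne_of_mem_of_not_mem h hbs⟩,
    fun ⟨hxa, hxb⟩ => (hx.resolve_left hxa).resolve_left hxb⟩

theorem _root_.Equiv.trans_swap_eq_iff {α β : Type*} [DecidableEq β] (f g : α ≃ β)
    {a b : α} {i j : β} (hfa : f a = i) (hfb : f b = j) (hga : g a = j) (hgb : g b = i) :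
    f.trans (Equiv.swap i j) = g ↔ ∀ x, x ≠ a → x ≠ b → f x = g x := by
  constructor
  · rintro rfl x hxa hxb
    refine (Equiv.swap_apply_of_ne_of_ne ?_ ?_).symm
    · exact hfa ▸ f.injective.ne hxa
    · exact hfb ▸ f.injective.ne hxb
  · intro h
    ext x
    by_cases hxa : x = a
    · subst hxa; simp [hfa, hga]
    by_cases hxb : x = b
    · subst hxb; simp [hfb, hgb]
    simp only [Equiv.trans_apply]
    rw [Equiv.swap_apply_of_ne_of_ne, h x hxa hxb]
    · exact hfa ▸ f.injective.ne hxa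
    · exact hfb ▸ f.injective.ne hxb

theorem _root_.EuclideanSpace.apply_eq_of_inner_eq_of_map_single {ι κ : Type*} [Fintype ι]
    [Fintype κ] [DecidableEq ι] [DecidableEq κ] (A : EuclideanSpace ℝ κ →ₗ[ℝ] EuclideanSpace ℝ ι)
    (B : EuclideanSpace ℝ ι →ₗ[ℝ] EuclideanSpace ℝ κ) (e : ι → κ)
    (hB : ∀ i, B (EuclideanSpace.single i 1) = EuclideanSpace.single (e i) 1)
    (hAB : ∀ x y, ⟪A x, y⟫ = ⟪x, B y⟫) (x : EuclideanSpace ℝ κ) (i : ι) :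
    A x i = x (e i) := by
  calc A x i = ⟪A x, EuclideanSpace.single i 1⟫ := by simp [EuclideanSpace.inner_single_right]
    _ = ⟪x, EuclideanSpace.single (e i) 1⟫ := by rw [hAB, hB]
    _ = x (e i) := by simp [EuclideanSpace.inner_single_right]

def IsExtension {α β : YoungDiagram} (h : α.cells ⊆ β.cells)
    (f : {c : ℕ × ℕ // c ∈ β.cells} ≃ Fin β.card) (g : {c : ℕ × ℕ // c ∈ α.cells} ≃ Fin α.card) :
    Prop :=
  ∀ (c : ℕ × ℕ) (hc : c ∈ α.cells), (f ⟨c, h hc⟩ : ℕ) = g ⟨c, hc⟩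

theorem IsExtension.apply_of_notMem {α β : YoungDiagram} {h : α.cells ⊆ β.cells}
    {f : {c : ℕ × ℕ // c ∈ β.cells} ≃ Fin β.card} {g : {c : ℕ × ℕ // c ∈ α.cells} ≃ Fin α.card}
    (hf : IsExtension h f g) (hcard : β.card = α.card + 1) {c : ℕ × ℕ} (hc : c ∈ β.cells)
    (hcα : c ∉ α.cells) : (f ⟨c, hc⟩ : ℕ) = α.card := by
  have hβ := Finset.eq_insert_of_card_eq_add_one h hcard hc hcα
  set y := f.symm ⟨α.card, by omega⟩
  have hy : y.1 = c := by
    have hyβ : y.1 ∈ insert c α.cells := hβ ▸ y.2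
    refine (Finset.mem_insert.mp hyβ).resolve_right fun hyα => ?_
    have := hf y.1 hyα
    simp only [Subtype.coe_eta, y, Equiv.apply_symm_apply] at this
    exact (g ⟨y.1, hyα⟩).isLt.ne this.symm
  have : (⟨c, hc⟩ : {c // c ∈ β.cells}) = y := Subtype.ext hy.symm
  rw [this, Equiv.apply_symm_apply]

theorem IsExtension.trans {α β γ : YoungDiagram} {hαβ : α.cells ⊆ β.cells}
    {hβγ : β.cells ⊆ γ.cells} {f : {c : ℕ × ℕ // c ∈ γ.cells} ≃ Fin γ.card}
    {g : {c : ℕ × ℕ // c ∈ β.cells} ≃ Fin β.card} {t : {c : ℕ × ℕ // c ∈ α.cells} ≃ Fin α.card}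
    (hg : IsExtension hαβ g t) (hf : IsExtension hβγ f g) :
    IsExtension (hαβ.trans hβγ) f t :=
  fun c hc => (hf c (hαβ hc)).trans (hg c hc)

theorem IsExtension.apply_of_two_notMem {α β γ : YoungDiagram} {hαβ : α.cells ⊆ β.cells}
    {hβγ : β.cells ⊆ γ.cells} {f : {c : ℕ × ℕ // c ∈ γ.cells} ≃ Fin γ.card}
    {g : {c : ℕ × ℕ // c ∈ β.cells} ≃ Fin β.card} {t : {c : ℕ × ℕ // c ∈ α.cells} ≃ Fin α.card}
    (hg : IsExtension hαβ g t) (hf : IsExtension hβγ f g) (hαβ_card : β.card = α.card + 1)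
    (hβγ_card : γ.card = β.card + 1) {a b : ℕ × ℕ} (ha : a ∈ β.cells) (haα : a ∉ α.cells)
    (hb : b ∈ γ.cells) (hbβ : b ∉ β.cells) {k : Fin γ.card} (hk : (k : ℕ) = α.card + 1) :
    f ⟨a, hβγ ha⟩ = kpred k ∧ f ⟨b, hb⟩ = k := by
  have hfa := (hf a ha).trans (hg.apply_of_notMem hαβ_card ha haα)
  have hfb := hf.apply_of_notMem hβγ_card hb hbβ
  exact ⟨Fin.ext (by simp only [kpred]; omega), Fin.ext (by omega)⟩

theorem IsExtension.trans_swap_eq_iff {α γ : YoungDiagram} {h : α.cells ⊆ γ.cells}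
    {f g : {c : ℕ × ℕ // c ∈ γ.cells} ≃ Fin γ.card}
    {t t' : {c : ℕ × ℕ // c ∈ α.cells} ≃ Fin α.card} (hf : IsExtension h f t)
    (hg : IsExtension h g t') {a b : ℕ × ℕ} (ha : a ∈ γ.cells) (hb : b ∈ γ.cells)
    (hcells : ∀ x ∈ γ.cells, x ∈ α.cells ↔ x ≠ a ∧ x ≠ b) {i j : Fin γ.card}
    (hfa : f ⟨a, ha⟩ = i) (hfb : f ⟨b, hb⟩ = j) (hga : g ⟨a, ha⟩ = j) (hgb : g ⟨b, hb⟩ = i) :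
    f.trans (Equiv.swap i j) = g ↔ t = t' := by
  rw [Equiv.trans_swap_eq_iff f g hfa hfb hga hgb]
  constructor
  · intro hfg
    ext ⟨x, hx⟩
    obtain ⟨hxa, hxb⟩ := (hcells x (h hx)).1 hx
    rw [← hf x hx, ← hg x hx,
      hfg ⟨x, h hx⟩ (fun hxa' => hxa (congrArg Subtype.val hxa'))
        (fun hxb' => hxb (congrArg Subtype.val hxb'))]
  · rintro rfl ⟨x, hx⟩ hxa hxb
    have hxα := (hcells x hx).2 ⟨fun hxa' => hxa (Subtype.ext hxa'),
      fun hxb' => hxb (Subtype.ext hxb')⟩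
    exact Fin.ext ((hf x hxα).trans (hg x hxα).symm)

theorem kpred_ne_self {μ : YoungDiagram} {k : Fin μ.card} (hk : 1 ≤ (k : ℕ)) : kpred k ≠ k :=
  Fin.ne_of_val_ne (by simp only [kpred]; omega)

theorem youngOp_single_apply (μ : YoungDiagram) (k : Fin μ.card) (S U : SYT μ) :
    youngOp μ k (EuclideanSpace.single S 1) U =
      (dval k U)⁻¹ * (if U = S then 1 else 0) +
        √(1 - (dval k U)⁻¹ ^ 2) * (if swapped k U = S.1 then 1 else 0) := by
  simp only [youngOp, LinearMap.coe_mk, AddHom.coe_mk, PiLp.toLp_apply,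
    PiLp.single_apply]
  congr 2
  split_ifs with hstd hS hS
  · exact (PiLp.single_apply _ _ _ _ _).trans (if_pos (Subtype.ext hS))
  · exact (PiLp.single_apply _ _ _ _ _).trans (if_neg fun h => hS (congrArg Subtype.val h))
  · exact absurd (hS ▸ S.2) hstd
  · rfl

theorem dval_eq_of_apply_eq {μ : YoungDiagram} {k : Fin μ.card} {U : SYT μ} {a b : ℕ × ℕ}
    {ha : a ∈ μ.cells} {hb : b ∈ μ.cells} (hUa : U.1 ⟨a, ha⟩ = k) (hUb : U.1 ⟨b, hb⟩ = kpred k) :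
    dval k U = (((a.2 : ℤ) - a.1 - ((b.2 : ℤ) - b.1) : ℤ) : ℝ) := by
  rw [dval, content, content, (Equiv.symm_apply_eq _).2 hUa.symm,
    (Equiv.symm_apply_eq _).2 hUb.symm]

theorem comp_youngOp_comp_eq_smul_id {ι : Type*} [Fintype ι] [DecidableEq ι]
    {μ : YoungDiagram} (k : Fin μ.card) (A : EuclideanSpace ℝ (SYT μ) →ₗ[ℝ] EuclideanSpace ℝ ι)
    (B : EuclideanSpace ℝ ι →ₗ[ℝ] EuclideanSpace ℝ (SYT μ)) (e e' : ι → SYT μ)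
    (hA : ∀ x i, A x i = x (e' i))
    (hB : ∀ i, B (EuclideanSpace.single i 1) = EuclideanSpace.single (e i) 1)
    (hne : ∀ i j, e' j ≠ e i) (hswap : ∀ i j, swapped k (e' j) = (e i).1 ↔ j = i) (d : ℝ)
    (hd : ∀ j, dval k (e' j) = d) :
    A ∘ₗ youngOp μ k ∘ₗ B = √(1 - d⁻¹ ^ 2) • LinearMap.id := by
  refine (EuclideanSpace.basisFun _ ℝ).toBasis.ext fun i => ?_
  ext j
  simp only [LinearMap.comp_apply, OrthonormalBasis.coe_toBasis, EuclideanSpace.basisFun_apply,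
    hA, hB, youngOp_single_apply, if_neg (hne i j), hswap, hd, LinearMap.smul_apply,
    LinearMap.id_apply, PiLp.smul_apply, PiLp.single_apply, mul_zero, zero_add, smul_eq_mul]

/-- Let `n ≥ 2`, let `λ` be a partition of `n−2`, let `μ ≠ ν` be
two distinct partitions of `n−1` obtained from `λ` by adding one cell, and `ξ` a
partition of `n` obtained from each of `μ` and `ν` by adding one cell.  Let `c₁` be
the content of the cell `ξ/μ` and `c₂` the content of the cell `μ/λ`.  With the
box-adding maps `i_{μλ}, i_{ξμ}, i_{νλ}, i_{ξν}`, the adjoints `i_{λν}, i_{νξ}`, and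
the Young orthogonal form representation `ρ_ξ`, the endomorphism
`i_{λν} ∘ i_{νξ} ∘ ρ_ξ((n−1 n)) ∘ i_{ξμ} ∘ i_{μλ}` of `W^λ` equals
`√(1 − 1/(c₁−c₂)²) · id = sin θ · id`, where `cos θ = 1/(c₁−c₂)`, `θ ∈ [0,π]`. -/
theorem composite_eq_sin_smul_id (lam mu nu xi : YoungDiagram) (hmunu : mu ≠ nu)
    (hsub1 : lam.cells ⊆ mu.cells) (hcard1 : mu.card = lam.card + 1)
    (hsub1' : lam.cells ⊆ nu.cells) (hcard1' : nu.card = lam.card + 1)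
    (hsub2 : mu.cells ⊆ xi.cells) (hcard2 : xi.card = mu.card + 1)
    (hsub2' : nu.cells ⊆ xi.cells) (hcard2' : xi.card = nu.card + 1)
    (cell1 : ℕ × ℕ) (hcell1 : cell1 ∈ xi.cells ∧ cell1 ∉ mu.cells)
    (cell2 : ℕ × ℕ) (hcell2 : cell2 ∈ mu.cells ∧ cell2 ∉ lam.cells)
    (ext1 : SYT lam → SYT mu)
    (hext1 : ∀ (T : SYT lam) (c : ℕ × ℕ) (hc : c ∈ lam.cells),
      (((ext1 T).1 ⟨c, hsub1 hc⟩ : Fin mu.card) : ℕ) = ((T.1 ⟨c, hc⟩ : Fin lam.card) : ℕ))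
    (ext2 : SYT mu → SYT xi)
    (hext2 : ∀ (T : SYT mu) (c : ℕ × ℕ) (hc : c ∈ mu.cells),
      (((ext2 T).1 ⟨c, hsub2 hc⟩ : Fin xi.card) : ℕ) = ((T.1 ⟨c, hc⟩ : Fin mu.card) : ℕ))
    (ext1' : SYT lam → SYT nu)
    (hext1' : ∀ (T : SYT lam) (c : ℕ × ℕ) (hc : c ∈ lam.cells),
      (((ext1' T).1 ⟨c, hsub1' hc⟩ : Fin nu.card) : ℕ) = ((T.1 ⟨c, hc⟩ : Fin lam.card) : ℕ))
    (ext2' : SYT nu → SYT xi)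
    (hext2' : ∀ (T : SYT nu) (c : ℕ × ℕ) (hc : c ∈ nu.cells),
      (((ext2' T).1 ⟨c, hsub2' hc⟩ : Fin xi.card) : ℕ) = ((T.1 ⟨c, hc⟩ : Fin nu.card) : ℕ))
    (i1 : EuclideanSpace ℝ (SYT lam) →ₗ[ℝ] EuclideanSpace ℝ (SYT mu))
    (hi1 : ∀ T : SYT lam,
      i1 (EuclideanSpace.single T (1 : ℝ)) = EuclideanSpace.single (ext1 T) (1 : ℝ))
    (i2 : EuclideanSpace ℝ (SYT mu) →ₗ[ℝ] EuclideanSpace ℝ (SYT xi))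
    (hi2 : ∀ T : SYT mu,
      i2 (EuclideanSpace.single T (1 : ℝ)) = EuclideanSpace.single (ext2 T) (1 : ℝ))
    (i1' : EuclideanSpace ℝ (SYT lam) →ₗ[ℝ] EuclideanSpace ℝ (SYT nu))
    (hi1' : ∀ T : SYT lam,
      i1' (EuclideanSpace.single T (1 : ℝ)) = EuclideanSpace.single (ext1' T) (1 : ℝ))
    (i2' : EuclideanSpace ℝ (SYT nu) →ₗ[ℝ] EuclideanSpace ℝ (SYT xi))
    (hi2' : ∀ T : SYT nu,
      i2' (EuclideanSpace.single T (1 : ℝ)) = EuclideanSpace.single (ext2' T) (1 : ℝ))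
    (iadj1' : EuclideanSpace ℝ (SYT nu) →ₗ[ℝ] EuclideanSpace ℝ (SYT lam))
    (hadj1' : ∀ (x : EuclideanSpace ℝ (SYT nu)) (y : EuclideanSpace ℝ (SYT lam)),
      ⟪iadj1' x, y⟫ = ⟪x, i1' y⟫)
    (iadj2' : EuclideanSpace ℝ (SYT xi) →ₗ[ℝ] EuclideanSpace ℝ (SYT nu))
    (hadj2' : ∀ (x : EuclideanSpace ℝ (SYT xi)) (y : EuclideanSpace ℝ (SYT nu)),
      ⟪iadj2' x, y⟫ = ⟪x, i2' y⟫)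
    (ρxi : Equiv.Perm (Fin xi.card) →* (Module.End ℝ (EuclideanSpace ℝ (SYT xi)))ˣ)
    (hρxi : ∀ k : Fin xi.card, 1 ≤ k.val →
      ((ρxi (Equiv.swap (kpred k) k) : Module.End ℝ (EuclideanSpace ℝ (SYT xi)))) =
        youngOp xi k) :
    iadj1' ∘ₗ iadj2' ∘ₗ
        ((ρxi (Equiv.swap (kpred (⟨xi.card - 1, by omega⟩ : Fin xi.card))
            (⟨xi.card - 1, by omega⟩ : Fin xi.card)) :
          Module.End ℝ (EuclideanSpace ℝ (SYT xi)))) ∘ₗ i2 ∘ₗ i1 =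
      Real.sqrt (1 -
          (((((cell1.2 : ℤ) - (cell1.1 : ℤ)) - ((cell2.2 : ℤ) - (cell2.1 : ℤ)) : ℤ) : ℝ))⁻¹ ^ 2) •
        (LinearMap.id : EuclideanSpace ℝ (SYT lam) →ₗ[ℝ] EuclideanSpace ℝ (SYT lam)) := by
  set k0 : Fin xi.card := ⟨xi.card - 1, by omega⟩
  have hc1lam : cell1 ∉ lam.cells := fun h => hcell1.2 (hsub1 h)
  have hmu := Finset.eq_insert_of_card_eq_add_one hsub1 hcard1 hcell2.1 hcell2.2
  have hxi := Finset.eq_insert_of_card_eq_add_one hsub2 hcard2 hcell1.1 hcell1.2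
  obtain ⟨hc1nu, hc2nu⟩ := Finset.mem_and_notMem_of_diamond
    (fun h => hmunu (YoungDiagram.ext h)) hsub1' hsub2' hcard1' hcard2' hmu hxi hcell2.2 hcell1.2
  have hcells : ∀ x ∈ xi.cells, x ∈ lam.cells ↔ x ≠ cell1 ∧ x ≠ cell2 := fun x hx =>
    Finset.mem_iff_ne_and_ne_of_mem_insert_insert (hmu ▸ hxi ▸ hx) hc1lam hcell2.2
  have hk0 : (k0 : ℕ) = lam.card + 1 := by simp only [k0]; omega
  have hS := fun T => IsExtension.apply_of_two_notMem (hext1 T) (hext2 (ext1 T)) hcard1 hcard2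
    hcell2.1 hcell2.2 hcell1.1 hcell1.2 hk0
  have hU := fun T => IsExtension.apply_of_two_notMem (hext1' T) (hext2' (ext1' T)) hcard1'
    hcard2' hc1nu hc1lam (hsub2 hcell2.1) hc2nu hk0
  have hUS : ∀ T T' : SYT lam, ext2' (ext1' T') ≠ ext2 (ext1 T) := fun T T' h =>
    kpred_ne_self (by omega) ((hS T).1.symm.trans (h ▸ (hU T').2))
  have hswap : ∀ T T' : SYT lam, swapped k0 (ext2' (ext1' T')) = (ext2 (ext1 T)).1 ↔ T' = T :=
    fun T T' => ((IsExtension.trans (hext1' T') (hext2' _)).trans_swap_eq_iff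
      (IsExtension.trans (hext1 T) (hext2 _)) _ _ hcells (hU T').1 (hU T').2 (hS T).2
      (hS T).1).trans Subtype.ext_iff.symm
  have hA : ∀ x T', (iadj1' ∘ₗ iadj2') x T' = x (ext2' (ext1' T')) := fun x T' =>
    (EuclideanSpace.apply_eq_of_inner_eq_of_map_single iadj1' i1' ext1' hi1' hadj1' _ T').trans
      (EuclideanSpace.apply_eq_of_inner_eq_of_map_single iadj2' i2' ext2' hi2' hadj2' x _)
  rw [hρxi k0 (by omega), ← neg_sub ((cell2.2 : ℤ) - cell2.1), Int.cast_neg, inv_neg, neg_sq]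
  exact comp_youngOp_comp_eq_smul_id k0 (iadj1' ∘ₗ iadj2') (i2 ∘ₗ i1) (fun T => ext2 (ext1 T))
    (fun T => ext2' (ext1' T)) hA (fun T => by rw [LinearMap.comp_apply, hi1, hi2]) hUS hswap _
    (fun T => dval_eq_of_apply_eq (hU T).2 (hU T).1)

end WLE
end
end
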